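/- arXiv:1512.04326 — 3 statements merged into one kernel-verified Lean document; each statement's English description precedes it below -/
import Mathlib

section
/- Let α be a k-anxious number, (a_i) ∈ A_α, and let h ∈ K(z) be a nonzero rational function. Then for any finite sequence (c_1,…,c_n) of rational functions: clm_{α,(a_i)}(h*(c_i)) = clm_{α,(a_i)}(c_i) − v_α(h) if α is not a root of unity, and clm_{α,(a_i)}(h*(c_i)) = clm_{α,(a_i)}(c_i) if α is a root of unity. -/
open Polynomial

attribute [local instance] Classical.propDecidable

noncomputable section

variable {K : Type*} [Field K]

/-- Integer order of vanishing of a rational function at `α` (junk value `0` for `c = 0`). -/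
def vInt (α : K) (c : RatFunc K) : ℤ :=
  (c.num.rootMultiplicity α : ℤ) - (c.denom.rootMultiplicity α : ℤ)

/-- The `(z - α)`-adic valuation on `K(z)`, with `vAt α 0 = ⊤`. -/
def vAt (α : K) (c : RatFunc K) : WithTop ℤ :=
  if c = 0 then ⊤ else (vInt α c : WithTop ℤ)

/-- Substitution `z ↦ z^i` in a rational function. -/
def substPow (i : ℕ) (c : RatFunc K) : RatFunc K :=
  RatFunc.eval (algebraMap K (RatFunc K)) (RatFunc.X ^ i) c

/-- A polynomial viewed as a rational function. -/
def toRat (p : Polynomial K) : RatFunc K := algebraMap (Polynomial K) (RatFunc K) p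

/-- A rational function is a polynomial. -/
def IsPolyFun (c : RatFunc K) : Prop := ∃ p : Polynomial K, c = toRat p

def IsRootOfUnity (α : K) : Prop := ∃ m : ℕ, 0 < m ∧ α ^ m = 1

/-- `α` is `k`-calm: zero, or a root of unity whose order is not coprime to `k`. -/
def IsCalmNum (k : ℕ) (α : K) : Prop :=
  α = 0 ∨ (0 < orderOf α ∧ ¬ Nat.Coprime (orderOf α) k)

def IsAnxious (k : ℕ) (α : K) : Prop := ¬ IsCalmNum k α

/-- A rational function is `k`-calm: no poles at `k`-anxious numbers. -/
def IsCalmFun (k : ℕ) (c : RatFunc K) : Prop :=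
  ∀ α : K, IsAnxious k α → 0 ≤ vAt α c

/-- Action of a rational function `h` on a finite sequence `(c_1, …, c_n)`;
the index `i : Fin n` stands for the 1-based index `i+1`. -/
def act (k : ℕ) (h : RatFunc K) {n : ℕ} (c : Fin n → RatFunc K) : Fin n → RatFunc K :=
  fun i => substPow (k ^ (i.1 + 1)) h / h * c i

def IsPrecalmSeq (k : ℕ) {n : ℕ} (c : Fin n → RatFunc K) : Prop :=
  ∃ h : Polynomial K, h ≠ 0 ∧ ∀ i, IsCalmFun k (act k (toRat h) c i)

/-- Partial sums `ā_i = a_0 + … + a_{i-1}` of an infinite sequence with values in `{1,…,n}`. -/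
def abarInf {n : ℕ} (a : ℕ → Fin n) (i : ℕ) : ℕ :=
  ∑ j ∈ Finset.range i, ((a j).1 + 1)

/-- Partial sums for a finite sequence (a list). -/
def abarList {n : ℕ} (l : List (Fin n)) (i : ℕ) : ℕ :=
  ((l.take i).map (fun j => j.1 + 1)).sum

/-- Full sum `ā_μ` of a finite sequence. -/
def barSum {n : ℕ} (l : List (Fin n)) : ℕ := (l.map (fun j => j.1 + 1)).sum

/-- Calmness w.r.t. an anxious `α` that is not a root of unity and an infinite sequence. -/
def clmInf (k : ℕ) (α : K) {n : ℕ} (c : Fin n → RatFunc K) (a : ℕ → Fin n) : WithTop ℤ :=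
  if ∃ i, c (a i) = 0 then ⊤
  else ((∑ᶠ i : ℕ, vInt (α ^ k ^ abarInf a i) (c (a i)) : ℤ) : WithTop ℤ)

/-- Calmness w.r.t. an anxious root of unity `α` and a finite sequence. -/
def clmList (k : ℕ) (α : K) {n : ℕ} (c : Fin n → RatFunc K) (l : List (Fin n)) : WithTop ℤ :=
  ∑ i : Fin l.length, vAt (α ^ k ^ abarList l i.1) (c (l.get i))

/-- Calmness of a single rational function w.r.t. an anxious `α`. -/
def clmOne (k : ℕ) (α : K) (c : RatFunc K) : WithTop ℤ :=
  if hμ : ∃ μ : ℕ, 0 < μ ∧ α ^ k ^ μ = α then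
    ∑ i ∈ Finset.range (Nat.find hμ), vAt (α ^ k ^ i) c
  else if c = 0 then ⊤
  else ((∑ᶠ i : ℕ, vInt (α ^ k ^ i) c : ℤ) : WithTop ℤ)

/-- The `k`-kernel of a sequence. -/
def kernelSet (k : ℕ) (a : ℕ → K) : Set (ℕ → K) :=
  { b | ∃ e r : ℕ, r < k ^ e ∧ b = fun i => a (k ^ e * i + r) }

/-- `k`-regularity of a formal power series. -/
def IsRegularSeries (k : ℕ) (f : PowerSeries K) : Prop :=
  FiniteDimensional K (Submodule.span K (kernelSet k (fun i => PowerSeries.coeff i f)))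

/-- Cartier operator `Λ_{k,r}`. -/
def cartier (k r : ℕ) (f : PowerSeries K) : PowerSeries K :=
  PowerSeries.mk fun i => PowerSeries.coeff (k * i + r) f

/-- Substitution `z ↦ z^m` in a power series (for `m ≥ 1`). -/
def psSubstPow (m : ℕ) (f : PowerSeries K) : PowerSeries K :=
  PowerSeries.mk fun i => if m ∣ i then PowerSeries.coeff (i / m) f else 0

/-- `f` satisfies the Mahler equation `f(z) = Σ_{i=1}^n c_i(z) f(z^{k^i})`. -/
def SatisfiesMahler (k : ℕ) {n : ℕ} (c : Fin n → RatFunc K) (f : PowerSeries K) : Prop :=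
  ∃ (q : Polynomial K) (p : Fin n → Polynomial K), q ≠ 0 ∧
    (∀ i, toRat q * c i = toRat (p i)) ∧
    (q : PowerSeries K) * f = ∑ i : Fin n, ((p i : PowerSeries K) * psSubstPow (k ^ (i.1 + 1)) f)


/-- Substitution `z ↦ z^m` in a formal Laurent series (for `m ≥ 1`). -/
def lsSubstPow (m : ℕ) (g : LaurentSeries K) : LaurentSeries K :=
  if h : 0 < m then
    HahnSeries.embDomain
      (OrderEmbedding.ofStrictMono (fun n : ℤ => (m : ℤ) * n)
        (fun a b hab => by
          exact mul_lt_mul_of_pos_left hab (by exact_mod_cast h))) g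
  else 0

/-- A Laurent series `g` satisfies the Mahler equation `g(z) = Σ_{i=1}^n b_i(z) g(z^{k^i})`
with polynomial coefficients. -/
def SatisfiesMahlerPolyLS (k : ℕ) {n : ℕ} (b : Fin n → Polynomial K) (g : LaurentSeries K) : Prop :=
  g = ∑ i : Fin n, (((b i : PowerSeries K) : LaurentSeries K) * lsSubstPow (k ^ (i.1 + 1)) g)

/-- Coefficients `d_{i,m}` of the special operators associated to `(c_1, …, c_n)`:
`dCoef k c m i` is `d_{i,m}`, with value `0` outside the range `1 ≤ i ≤ m + n`. -/
def dCoef (k : ℕ) {n : ℕ} (c : Fin n → RatFunc K) : ℕ → ℕ → RatFunc K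
  | 0 => fun i => if h : 1 ≤ i ∧ i ≤ n then c ⟨i - 1, by omega⟩ else 0
  | m + 1 => fun i =>
      if _h1 : i ≤ m then dCoef k c m i
      else if _h2 : i = m + 1 then 0
      else if h3 : i ≤ m + 1 + n then
        dCoef k c m i + dCoef k c m (m + 1) * substPow (k ^ (m + 1)) (c ⟨i - m - 2, by omega⟩)
      else 0

end

/-! For `γ ≠ 0` and `m` invertible in `K`, the substitution `z ↦ z ^ m` is unramified at `γ`:
`v_γ(h(z ^ m)) = v_{γ ^ m}(h)`. Hence acting by `h` adds `v_{β_{i+1}}(h) - v_{β_i}(h)` to the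
`i`-th term of the calmness sum, where `β_i = α ^ k ^ ā_i`, and the sum telescopes: to `-v_α(h)`
along an infinite sequence (the `β_i` are pairwise distinct, so only finitely many terms are
nonzero), and to `0` along a cycle, where `β_μ = α`. -/

section Valuation

variable {K : Type*} [Field K]

theorem vInt_toRat_div_toRat (α : K) {p q : K[X]} (hp : p ≠ 0) (hq : q ≠ 0) :
    vInt α (toRat p / toRat q) =
      (p.rootMultiplicity α : ℤ) - (q.rootMultiplicity α : ℤ) := by
  set x := toRat p / toRat q
  have hx : x ≠ 0 := div_ne_zero (RatFunc.algebraMap_ne_zero hp) (RatFunc.algebraMap_ne_zero hq)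
  have hcross : x.num * q = p * x.denom := (RatFunc.num_mul_eq_mul_denom_iff hq).2 rfl
  have hmult := congrArg (rootMultiplicity α) hcross
  rw [rootMultiplicity_mul (mul_ne_zero (RatFunc.num_ne_zero hx) hq),
    rootMultiplicity_mul (mul_ne_zero hp x.denom_ne_zero)] at hmult
  simp only [vInt]
  omega

theorem vInt_mul (α : K) {x y : RatFunc K} (hx : x ≠ 0) (hy : y ≠ 0) :
    vInt α (x * y) = vInt α x + vInt α y := by
  have hxy : x * y = toRat (x.num * y.num) / toRat (x.denom * y.denom) := by
    simp only [toRat, map_mul, ← div_mul_div_comm, RatFunc.num_div_denom]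
  rw [hxy, vInt_toRat_div_toRat α
      (mul_ne_zero (RatFunc.num_ne_zero hx) (RatFunc.num_ne_zero hy))
      (mul_ne_zero x.denom_ne_zero y.denom_ne_zero),
    rootMultiplicity_mul (mul_ne_zero (RatFunc.num_ne_zero hx) (RatFunc.num_ne_zero hy)),
    rootMultiplicity_mul (mul_ne_zero x.denom_ne_zero y.denom_ne_zero)]
  simp only [vInt]
  push_cast
  ring

theorem vInt_div (α : K) {x y : RatFunc K} (hx : x ≠ 0) (hy : y ≠ 0) :
    vInt α (x / y) = vInt α x - vInt α y := by
  have := vInt_mul α (div_ne_zero hx hy) hy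
  rw [div_mul_cancel₀ x hy] at this
  omega

theorem finite_support_vInt {ι : Type*} {β : ι → K} (hβ : Function.Injective β)
    (x : RatFunc K) : (Function.support fun i => vInt (β i) x).Finite := by
  refine ((x.num.roots.toFinset ∪ x.denom.roots.toFinset).finite_toSet.preimage
    hβ.injOn).subset fun i hi => ?_
  simp only [Function.mem_support, vInt] at hi
  simp only [Set.mem_preimage, Finset.coe_union, Set.mem_union, Finset.mem_coe,
    Multiset.mem_toFinset, ← Multiset.count_ne_zero, count_roots]
  omega

end Valuation

section Substitution

variable {K : Type*} [Field K]

theorem substPow_eq_div (m : ℕ) (x : RatFunc K) :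
    substPow m x = toRat (expand K m x.num) / toRat (expand K m x.denom) := by
  have heval : ∀ p : K[X],
      p.eval₂ (algebraMap K (RatFunc K)) (RatFunc.X ^ m) = toRat (expand K m p) := by
    intro p
    have hC : (algebraMap K[X] (RatFunc K)).comp C = algebraMap K (RatFunc K) := by
      rw [IsScalarTower.algebraMap_eq K K[X] (RatFunc K), Polynomial.algebraMap_eq]
    rw [expand_eq_comp_X_pow, comp, toRat, hom_eval₂, hC, map_pow, RatFunc.algebraMap_X]
  simp only [substPow, RatFunc.eval, heval]

theorem substPow_ne_zero {m : ℕ} (hm : m ≠ 0) {x : RatFunc K} (hx : x ≠ 0) :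
    substPow m x ≠ 0 := by
  have hm0 := Nat.pos_of_ne_zero hm
  rw [substPow_eq_div]
  exact div_ne_zero
    (RatFunc.algebraMap_ne_zero ((expand_ne_zero hm0).2 (RatFunc.num_ne_zero hx)))
    (RatFunc.algebraMap_ne_zero ((expand_ne_zero hm0).2 x.denom_ne_zero))

theorem exists_X_pow_sub_C_eq_mul {α : K} (hα : α ≠ 0) {m : ℕ} (hm : (m : K) ≠ 0) :
    ∃ g : K[X], X ^ m - C (α ^ m) = (X - C α) * g ∧ g.eval α ≠ 0 := by
  have hfac := mul_divByMonic_eq_iff_isRoot.2 (show (X ^ m - C (α ^ m)).IsRoot α by simp)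
  refine ⟨_, hfac.symm, ?_⟩
  have hderiv := congrArg (fun p => (derivative p).eval α) hfac
  simp only [derivative_mul, derivative_sub, derivative_X, derivative_C, sub_zero, one_mul,
    eval_add, eval_mul, eval_sub, eval_X, eval_C, sub_self, zero_mul, add_zero,
    derivative_X_pow, eval_pow] at hderiv
  rw [hderiv]
  exact mul_ne_zero hm (pow_ne_zero _ hα)

theorem rootMultiplicity_expand_of_ne_zero {α : K} (hα : α ≠ 0) {m : ℕ} (hm : (m : K) ≠ 0)
    {p : K[X]} (hp : p ≠ 0) :
    (expand K m p).rootMultiplicity α = p.rootMultiplicity (α ^ m) := by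
  obtain ⟨g, hg, hgα⟩ := exists_X_pow_sub_C_eq_mul hα hm
  have hdec := pow_mul_divByMonic_rootMultiplicity_eq p (α ^ m)
  have hsβ := eval_divByMonic_pow_rootMultiplicity_ne_zero (α ^ m) hp
  generalize p /ₘ (X - C (α ^ m)) ^ p.rootMultiplicity (α ^ m) = s at hdec hsβ
  generalize p.rootMultiplicity (α ^ m) = d at hdec hsβ ⊢
  have hq : (g ^ d * expand K m s).eval α ≠ 0 := by
    rw [eval_mul, eval_pow, expand_eval]
    exact mul_ne_zero (pow_ne_zero _ hgα) hsβ
  have hexp : expand K m p = g ^ d * expand K m s * (X - C α) ^ d := by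
    rw [← hdec, map_mul, map_pow, map_sub, expand_X, expand_C, hg, mul_pow]
    ac_rfl
  rw [hexp, rootMultiplicity_mul_X_sub_C_pow (fun h0 => hq (by rw [h0, eval_zero])),
    rootMultiplicity_eq_zero hq, zero_add]

end Substitution

section Action

variable {K : Type*} [Field K] {k : ℕ}

theorem vInt_substPow {α : K} (hα : α ≠ 0) {m : ℕ} (hm : (m : K) ≠ 0) {x : RatFunc K}
    (hx : x ≠ 0) : vInt α (substPow m x) = vInt (α ^ m) x := by
  have hm0 : 0 < m := Nat.pos_of_ne_zero (by rintro rfl; simp at hm)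
  rw [substPow_eq_div, vInt_toRat_div_toRat α ((expand_ne_zero hm0).2 (RatFunc.num_ne_zero hx))
      ((expand_ne_zero hm0).2 x.denom_ne_zero),
    rootMultiplicity_expand_of_ne_zero hα hm (RatFunc.num_ne_zero hx),
    rootMultiplicity_expand_of_ne_zero hα hm x.denom_ne_zero, vInt]

theorem act_ne_zero_iff (hk : (k : K) ≠ 0) {h : RatFunc K} (hh : h ≠ 0) {n : ℕ}
    {c : Fin n → RatFunc K} (i : Fin n) : act k h c i ≠ 0 ↔ c i ≠ 0 := by
  have hsubst : substPow (k ^ (i.1 + 1)) h ≠ 0 :=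
    substPow_ne_zero (pow_ne_zero _ (by rintro rfl; simp at hk)) hh
  simp [act, hsubst, hh]

theorem vInt_act (hk : (k : K) ≠ 0) {h : RatFunc K} (hh : h ≠ 0) {n : ℕ}
    {c : Fin n → RatFunc K} {γ : K} (hγ : γ ≠ 0) {i : Fin n} (hci : c i ≠ 0) :
    vInt γ (act k h c i) = vInt γ (c i) + (vInt (γ ^ k ^ (i.1 + 1)) h - vInt γ h) := by
  have hkm : ((k ^ (i.1 + 1) : ℕ) : K) ≠ 0 := by push_cast; exact pow_ne_zero _ hk
  have hsubst : substPow (k ^ (i.1 + 1)) h ≠ 0 :=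
    substPow_ne_zero (pow_ne_zero _ (by rintro rfl; simp at hk)) hh
  rw [act, vInt_mul γ (div_ne_zero hsubst hh) hci, vInt_div γ hsubst hh,
    vInt_substPow hγ hkm hh]
  ring

theorem vAt_act (hk : (k : K) ≠ 0) {h : RatFunc K} (hh : h ≠ 0) {n : ℕ}
    (c : Fin n → RatFunc K) {γ : K} (hγ : γ ≠ 0) (i : Fin n) :
    vAt γ (act k h c i) = vAt γ (c i) + ↑(vInt (γ ^ k ^ (i.1 + 1)) h - vInt γ h) := by
  by_cases hci : c i = 0
  · have hact : act k h c i = 0 := by simp [act, hci]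
    rw [vAt, vAt, if_pos hci, if_pos hact, WithTop.top_add]
  rw [vAt, vAt, if_neg ((act_ne_zero_iff hk hh i).2 hci), if_neg hci, vInt_act hk hh hγ hci,
    WithTop.coe_add]

end Action

section Telescoping

variable {K : Type*} [Field K] {k n : ℕ}

theorem abarInf_succ (a : ℕ → Fin n) (i : ℕ) :
    abarInf a (i + 1) = abarInf a i + ((a i).1 + 1) :=
  Finset.sum_range_succ _ _

theorem abarList_succ (l : List (Fin n)) (i : Fin l.length) :
    abarList l (i.1 + 1) = abarList l i.1 + ((l.get i).1 + 1) := by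
  rw [abarList, abarList, List.take_add_one, List.getElem?_eq_getElem i.isLt]
  simp

theorem abarList_length (l : List (Fin n)) : abarList l l.length = barSum l := by
  rw [abarList, barSum, List.take_length]

theorem finsum_add_sub_succ {F G : ℕ → ℤ} (hF : (Function.support F).Finite)
    (hG : (Function.support G).Finite) :
    ∑ᶠ i, (F i + (G (i + 1) - G i)) = ∑ᶠ i, F i - G 0 := by
  obtain ⟨N, hN⟩ := (hF.union hG).bddAbove
  have hvanish : ∀ i, N < i → F i = 0 ∧ G i = 0 := fun i hi => by
    have : i ∉ Function.support F ∪ Function.support G := fun hmem => (hN hmem).not_gt hi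
    simpa [not_or] using this
  have hsub : ∀ f : ℕ → ℤ, (∀ i, N < i → f i = 0) →
      Function.support f ⊆ ↑(Finset.range (N + 1)) := fun f hf i hi => by
    by_contra hiN
    exact hi (hf i (by simpa using hiN))
  rw [finsum_eq_sum_of_support_subset _ (hsub _ fun i hi => by
      simp [hvanish i hi, hvanish (i + 1) (by omega)]),
    finsum_eq_sum_of_support_subset _ (hsub _ fun i hi => (hvanish i hi).1),
    Finset.sum_add_distrib, Finset.sum_range_sub, (hvanish (N + 1) (by omega)).2]
  ring

theorem pow_injective_of_not_isRootOfUnity {α : K} (hα : α ≠ 0) (hru : ¬ IsRootOfUnity α) :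
    Function.Injective (α ^ · : ℕ → K) := by
  have hu : Function.Injective fun e : ℕ => Units.mk0 α hα ^ e := by
    refine injective_pow_iff_not_isOfFinOrder.2 fun hfin => hru ?_
    obtain ⟨m, hm, hpow⟩ := isOfFinOrder_iff_pow_eq_one.1 hfin
    exact ⟨m, hm, by simpa using congrArg Units.val hpow⟩
  exact fun e e' he => hu (Units.ext (by simpa using he))

theorem injective_pow_pow_abarInf (hk : 2 ≤ k) {α : K} (hα : α ≠ 0)
    (hru : ¬ IsRootOfUnity α) (a : ℕ → Fin n) :
    Function.Injective fun i => α ^ k ^ abarInf a i :=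
  (pow_injective_of_not_isRootOfUnity hα hru).comp <| (Nat.pow_right_injective hk).comp <|
    (strictMono_nat_of_lt_succ fun i => by rw [abarInf_succ]; omega).injective

end Telescoping

section Calmness

variable {K : Type*} [Field K] {k n : ℕ}

theorem clmList_act (hk : (k : K) ≠ 0) {α : K} (hα : α ≠ 0) {h : RatFunc K} (hh : h ≠ 0)
    (c : Fin n → RatFunc K) (l : List (Fin n)) (hl : α ^ k ^ barSum l = α) :
    clmList k α (act k h c) l = clmList k α c l := by
  set G : ℕ → ℤ := fun j => vInt (α ^ k ^ abarList l j) h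
  have hstep : ∀ i : Fin l.length, vAt (α ^ k ^ abarList l i) (act k h c (l.get i)) =
      vAt (α ^ k ^ abarList l i) (c (l.get i)) + ↑(G (i + 1) - G i) := fun i => by
    rw [vAt_act hk hh c (pow_ne_zero _ hα), ← pow_mul, ← pow_add, ← abarList_succ]
  have htelescope : ∑ i : Fin l.length, (G (i + 1) - G i) = 0 := by
    rw [Fin.sum_univ_eq_sum_range (fun i => G (i + 1) - G i), Finset.sum_range_sub, sub_eq_zero]
    simp only [G, abarList_length, hl]
    simp [abarList]
  simp only [clmList, hstep, Finset.sum_add_distrib, ← WithTop.coe_sum, htelescope,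
    WithTop.coe_zero, add_zero]

theorem clmInf_act (hk2 : 2 ≤ k) (hk : (k : K) ≠ 0) {α : K} (hα : α ≠ 0)
    (hru : ¬ IsRootOfUnity α) {h : RatFunc K} (hh : h ≠ 0) (c : Fin n → RatFunc K)
    (a : ℕ → Fin n) :
    clmInf k α (act k h c) a = (clmInf k α c a).map (fun x => x - vInt α h) := by
  have hzero : (∃ i, act k h c (a i) = 0) ↔ ∃ i, c (a i) = 0 := by
    simp only [← not_ne_iff, act_ne_zero_iff hk hh]
  by_cases h0 : ∃ i, c (a i) = 0
  · rw [clmInf, clmInf, if_pos h0, if_pos (hzero.2 h0), WithTop.map_top]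
  rw [clmInf, clmInf, if_neg h0, if_neg (hzero.not.2 h0), WithTop.map_coe]
  rw [not_exists] at h0
  set β : ℕ → K := fun i => α ^ k ^ abarInf a i
  have hβ : Function.Injective β := injective_pow_pow_abarInf hk2 hα hru a
  set G : ℕ → ℤ := fun i => vInt (β i) h
  have hstep : ∀ i, vInt (β i) (act k h c (a i)) = vInt (β i) (c (a i)) + (G (i + 1) - G i) :=
    fun i => by
      rw [vInt_act hk hh (pow_ne_zero _ hα) (h0 i), ← pow_mul, ← pow_add, ← abarInf_succ]
  have hF : (Function.support fun i => vInt (β i) (c (a i))).Finite :=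
    (Set.finite_iUnion fun j => finite_support_vInt hβ (c j)).subset
      fun i hi => Set.mem_iUnion.2 ⟨a i, hi⟩
  rw [finsum_congr hstep, finsum_add_sub_succ hF (finite_support_vInt hβ h)]
  simp [β, abarInf]

end Calmness

theorem natCast_ne_zero_of_forall_charP_not_dvd {K : Type*} [Field K] {k : ℕ} (hk : k ≠ 0)
    (hch : ∀ p : ℕ, p.Prime → CharP K p → ¬ p ∣ k) : (k : K) ≠ 0 := by
  rw [ne_eq, ringChar.spec]
  rcases CharP.char_is_prime_or_zero K (ringChar K) with hp | hp
  · exact hch _ hp (ringChar.charP K)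
  · rwa [hp, zero_dvd_iff]

theorem stmt1_general {K : Type*} [Field K] (k : ℕ) (hk : 2 ≤ k)
    (hch : ∀ p : ℕ, p.Prime → CharP K p → ¬ p ∣ k)
    (α : K) (hα : IsAnxious k α)
    (h : RatFunc K) (hh : h ≠ 0) {n : ℕ} (c : Fin n → RatFunc K) :
    (¬ IsRootOfUnity α →
      ∀ a : ℕ → Fin n,
        clmInf k α (act k h c) a = (clmInf k α c a).map (fun x => x - vInt α h)) ∧
    (IsRootOfUnity α →
      ∀ l : List (Fin n), α ^ k ^ barSum l = α →
        clmList k α (act k h c) l = clmList k α c l) := by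
  have hα0 : α ≠ 0 := fun h0 => hα (Or.inl h0)
  have hkK : (k : K) ≠ 0 := natCast_ne_zero_of_forall_charP_not_dvd (by omega) hch
  exact ⟨fun hru a => clmInf_act hk hkK hα0 hru hh c a,
    fun _ l hl => clmList_act hkK hα0 hh c l hl⟩

theorem stmt1 {K : Type*} [Field K] [IsAlgClosed K] (k : ℕ) (hk : 2 ≤ k)
    (hch : ∀ p : ℕ, p.Prime → CharP K p → ¬ p ∣ k)
    (α : K) (hα : IsAnxious k α)
    (h : RatFunc K) (hh : h ≠ 0) {n : ℕ} (c : Fin n → RatFunc K) :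
    (¬ IsRootOfUnity α →
      ∀ a : ℕ → Fin n,
        clmInf k α (act k h c) a = (clmInf k α c a).map (fun x => x - vInt α h)) ∧
    (IsRootOfUnity α →
      ∀ l : List (Fin n), α ^ k ^ barSum l = α →
        clmList k α (act k h c) l = clmList k α c l) :=
  stmt1_general k hk hch α hα h hh c
end

section
/- Let (c_1,…,c_n) be a k-calm sequence of rational functions in K(z). Then there exists a nonzero polynomial h ∈ K[z] such that h*(c_i) = (h(z^{k^i})/h(z) · c_i(z))_{i=1}^n is a sequence of polynomials. -/
open Polynomial

attribute [local instance] Classical.propDecidable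

/-!
Let `S` be the set of nonzero poles of the `c_i`. By calmness each `γ ∈ S` is a root of unity
whose order `d` has a prime factor `p ∣ k`, so `M = d / p` satisfies `γ ^ M ≠ 1` but
`γ ^ (M * k ^ j) = 1` for `j ≥ 1`. Take `h = z^N ∏_{γ ∈ S} (z^{M_γ} - 1)^N` with `N` at least the
degree of every denominator. For `m = k ^ j ≥ 2`, `h(z^m) / h(z)` is a polynomial divisible by
`z^N ∏_{γ ∈ S} (z - γ)^N`, because `(z^{M m} - 1) / (z^M - 1) = ∑_{i < m} z^{M i}` vanishes at `γ`
(`γ ^ M` is a nontrivial `m`-th root of unity). Over an algebraically closed field this product is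
divisible by every denominator.
-/

theorem exists_pow_ne_one_and_pow_mul_pow_eq_one {G : Type*} [Monoid G] {γ : G} {k : ℕ}
    (hγ : 0 < orderOf γ) (hk : ¬ (orderOf γ).Coprime k) :
    ∃ M : ℕ, γ ^ M ≠ 1 ∧ ∀ j ≠ 0, γ ^ (M * k ^ j) = 1 := by
  obtain ⟨p, hp, ⟨M, hM⟩, hpk⟩ := Nat.Prime.not_coprime_iff_dvd.mp hk
  refine ⟨M, fun h1 => ?_, fun j hj => ?_⟩
  · have hM0 : 0 < M := Nat.pos_of_mul_pos_left (hM ▸ hγ)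
    have := Nat.le_of_dvd hM0 (hM ▸ orderOf_dvd_of_pow_eq_one h1)
    nlinarith [hp.two_le]
  · rw [← orderOf_dvd_iff_pow_eq_one, hM, mul_comm M]
    exact mul_dvd_mul_right (dvd_pow hpk hj) M

section Polynomial

variable {K : Type*} [Field K]

theorem X_sub_C_mul_dvd_X_pow_mul_sub_one {γ : K} {M m : ℕ} (h1 : γ ^ M ≠ 1)
    (h2 : γ ^ (M * m) = 1) : (X - C γ) * (X ^ M - 1) ∣ (X ^ (M * m) - 1 : K[X]) := by
  have hgeom : (X - C γ) ∣ ∑ i ∈ Finset.range m, (X ^ M : K[X]) ^ i := by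
    rw [dvd_iff_isRoot, IsRoot, eval_finsetSum]
    simp only [eval_pow, eval_X]
    rw [geom_sum_eq h1, ← pow_mul, h2, sub_self, zero_div]
  rw [pow_mul, ← mul_geom_sum (X ^ M : K[X]) m, mul_comm (X - C γ)]
  exact mul_dvd_mul_left _ hgeom

noncomputable def clearingPoly (S : Finset K) (M : K → ℕ) (N : ℕ) : K[X] :=
  X ^ N * ∏ γ ∈ S, (X ^ M γ - 1) ^ N

theorem clearingPoly_ne_zero {S : Finset K} {M : K → ℕ} (hM : ∀ γ ∈ S, γ ^ M γ ≠ 1) (N : ℕ) :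
    clearingPoly S M N ≠ 0 := by
  refine mul_ne_zero (pow_ne_zero _ X_ne_zero) (Finset.prod_ne_zero_iff.2 fun γ hγ => ?_)
  refine pow_ne_zero _ (X_pow_sub_C_ne_zero (Nat.pos_of_ne_zero fun h0 => hM γ hγ ?_) 1)
  rw [h0, pow_zero]

theorem X_mul_prod_pow_mul_clearingPoly_dvd_comp {S : Finset K} {M : K → ℕ} (N : ℕ) {m : ℕ}
    (hm : 2 ≤ m) (hS : ∀ γ ∈ S, γ ^ M γ ≠ 1 ∧ γ ^ (M γ * m) = 1) :
    (X * ∏ γ ∈ S, (X - C γ)) ^ N * clearingPoly S M N ∣ (clearingPoly S M N).comp (X ^ m) := by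
  have hcomp : (clearingPoly S M N).comp (X ^ m) =
      X ^ (N * m) * ∏ γ ∈ S, (X ^ (M γ * m) - 1 : K[X]) ^ N := by
    simp only [clearingPoly, mul_comp, pow_comp, X_comp, prod_comp, sub_comp, one_comp,
      ← pow_mul, mul_comm m]
  rw [hcomp, clearingPoly, mul_pow, ← Finset.prod_pow, mul_mul_mul_comm,
    ← Finset.prod_mul_distrib]
  refine mul_dvd_mul ?_ (Finset.prod_dvd_prod_of_dvd _ _ fun γ hγ => ?_)
  · rw [← pow_add, ← two_mul]
    exact pow_dvd_pow X (by nlinarith)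
  · rw [← mul_pow]
    exact pow_dvd_pow_of_dvd (X_sub_C_mul_dvd_X_pow_mul_sub_one (hS γ hγ).1 (hS γ hγ).2) N

theorem dvd_prod_roots_X_sub_C_pow [IsAlgClosed K] {v : K[X]} (hv : v ≠ 0) {N : ℕ}
    (hN : v.natDegree ≤ N) : v ∣ (∏ γ ∈ v.roots.toFinset, (X - C γ)) ^ N := by
  refine (IsAlgClosed.splits v).dvd_of_roots_le_roots hv (Multiset.le_iff_count.2 fun γ => ?_)
  rw [roots_pow, roots_prod_X_sub_C, Multiset.count_nsmul]
  by_cases hγ : γ ∈ v.roots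
  · rw [Multiset.count_eq_one_of_mem (Finset.nodup _) (Multiset.mem_toFinset.2 hγ), mul_one]
    exact (Multiset.count_le_card _ _).trans ((card_roots' v).trans hN)
  · simp [Multiset.count_eq_zero_of_notMem hγ]

theorem substPow_toRat (m : ℕ) (h : K[X]) : substPow m (toRat h) = toRat (h.comp (X ^ m)) := by
  rw [substPow, toRat, RatFunc.eval_algebraMap, toRat, comp, hom_eval₂, map_pow,
    RatFunc.algebraMap_X]
  rfl

theorem isPolyFun_div_mul_div {h v H : K[X]} (u : K[X]) (hh : h ≠ 0) (hv : v ≠ 0)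
    (hdvd : h * v ∣ H) : IsPolyFun (toRat H / toRat h * (toRat u / toRat v)) := by
  obtain ⟨g, rfl⟩ := hdvd
  refine ⟨g * u, ?_⟩
  have hh' : toRat h ≠ 0 := RatFunc.algebraMap_ne_zero hh
  have hv' : toRat v ≠ 0 := RatFunc.algebraMap_ne_zero hv
  simp only [toRat, map_mul] at *
  field_simp

theorem IsCalmFun.isCalmNum_of_isRoot_denom {k : ℕ} {c : RatFunc K} (hc : IsCalmFun k c)
    {γ : K} (hγ : c.denom.IsRoot γ) : IsCalmNum k γ := by
  by_contra hanx
  have hc0 : c ≠ 0 := by rintro rfl; simp at hγ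
  have hnum : c.num.rootMultiplicity γ = 0 := by
    refine rootMultiplicity_eq_zero fun hnum => ?_
    obtain ⟨a, b, hab⟩ := c.isCoprime_num_denom
    simpa [hnum.eq_zero, hγ.eq_zero] using congrArg (eval γ) hab
  have hden : 0 < c.denom.rootMultiplicity γ := (rootMultiplicity_pos c.denom_ne_zero).2 hγ
  have hv := hc γ hanx
  rw [vAt, if_neg hc0, vInt, hnum] at hv
  have : (0 : ℤ) ≤ 0 - c.denom.rootMultiplicity γ := by exact_mod_cast hv
  omega

theorem isPolyFun_substPow_clearingPoly_div_mul [IsAlgClosed K] {S : Finset K} {M : K → ℕ}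
    {N m : ℕ} (hm : 2 ≤ m) (hS : ∀ γ ∈ S, γ ^ M γ ≠ 1 ∧ γ ^ (M γ * m) = 1) {c : RatFunc K}
    (hroots : ∀ γ ∈ c.denom.roots, γ ≠ 0 → γ ∈ S) (hN : c.denom.natDegree ≤ N) :
    IsPolyFun (substPow m (toRat (clearingPoly S M N)) / toRat (clearingPoly S M N) * c) := by
  have hroots' : c.denom.roots.toFinset ⊆ insert 0 S := fun γ hγ => by
    rw [Finset.mem_insert]
    exact or_iff_not_imp_left.2 (hroots γ (Multiset.mem_toFinset.1 hγ))
  have hdenom : c.denom ∣ (X * ∏ γ ∈ S, (X - C γ)) ^ N := by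
    refine (dvd_prod_roots_X_sub_C_pow c.denom_ne_zero hN).trans (pow_dvd_pow_of_dvd ?_ N)
    have h0S : (0 : K) ∉ S := fun h0 => by
      obtain ⟨h1, h2⟩ := hS 0 h0
      rcases mul_eq_zero.1 (zero_pow_eq_one₀.1 h2) with h | h
      · exact h1 (by rw [h, pow_zero])
      · omega
    have := Finset.prod_dvd_prod_of_subset _ _ (X - C ·) hroots'
    rwa [Finset.prod_insert h0S, C_0, sub_zero] at this
  rw [substPow_toRat, ← c.num_div_denom]
  refine isPolyFun_div_mul_div _ (clearingPoly_ne_zero (fun γ hγ => (hS γ hγ).1) N)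
    c.denom_ne_zero ?_
  rw [mul_comm]
  exact (mul_dvd_mul_right hdenom _).trans (X_mul_prod_pow_mul_clearingPoly_dvd_comp N hm hS)

end Polynomial

theorem stmt2_general {K : Type*} [Field K] [IsAlgClosed K] (k : ℕ) (hk : 2 ≤ k)
    {n : ℕ} (c : Fin n → RatFunc K) (hc : ∀ i, IsCalmFun k (c i)) :
    ∃ h : Polynomial K, h ≠ 0 ∧ ∀ i, IsPolyFun (act k (toRat h) c i) := by
  set S := (Finset.univ.biUnion fun i => (c i).denom.roots.toFinset).erase 0
  have mem_S {γ : K} : γ ∈ S ↔ γ ≠ 0 ∧ ∃ i, γ ∈ (c i).denom.roots := by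
    simp only [S, Finset.mem_erase, Finset.mem_biUnion, Finset.mem_univ, true_and,
      Multiset.mem_toFinset]
  have hS : ∀ γ ∈ S, 0 < orderOf γ ∧ ¬ (orderOf γ).Coprime k := fun γ hγ => by
    obtain ⟨hγ0, i, hi⟩ := mem_S.1 hγ
    exact ((hc i).isCalmNum_of_isRoot_denom (isRoot_of_mem_roots hi)).resolve_left hγ0
  choose! M hM using fun γ hγ => exists_pow_ne_one_and_pow_mul_pow_eq_one (hS γ hγ).1 (hS γ hγ).2
  set N := ∑ i, (c i).denom.natDegree
  refine ⟨clearingPoly S M N, clearingPoly_ne_zero (fun γ hγ => (hM γ hγ).1) N, fun i => ?_⟩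
  have hm : 2 ≤ k ^ (i.1 + 1) := hk.trans (Nat.le_self_pow i.1.succ_ne_zero k)
  have hN : (c i).denom.natDegree ≤ N :=
    Finset.single_le_sum (f := fun j => (c j).denom.natDegree) (by simp) (Finset.mem_univ i)
  exact isPolyFun_substPow_clearingPoly_div_mul hm
    (fun γ hγ => ⟨(hM γ hγ).1, (hM γ hγ).2 _ i.1.succ_ne_zero⟩)
    (fun γ hγ hγ0 => mem_S.2 ⟨hγ0, i, hγ⟩) hN

theorem stmt2 {K : Type*} [Field K] [IsAlgClosed K] (k : ℕ) (hk : 2 ≤ k)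
    (hch : ∀ p : ℕ, p.Prime → CharP K p → ¬ p ∣ k)
    {n : ℕ} (c : Fin n → RatFunc K) (hc : ∀ i, IsCalmFun k (c i)) :
    ∃ h : Polynomial K, h ≠ 0 ∧ ∀ i, IsPolyFun (act k (toRat h) c i) :=
  stmt2_general k hk c hc
end

section
/- Fix a k-anxious root of unity α, let m be the smallest positive integer such that α^{k^m} = α, and let 𝒜 be the disjoint union of the sets A_{α^{k^i}} for 0 ≤ i ≤ m−1. Let (c_1,…,c_m) be a sequence of rational functions of length exactly m with every c_i ≠ 0. If clm_{(a_i)}(c_i) ≥ 0 for every (a_i) ∈ 𝒜, then there exists a nonzero polynomial h ∈ K[z] such that the sequence h*(c_i) is α^{k^i}-calm for every i ≥ 0, i.e. no term of h*(c_i) has a pole at any α^{k^i}. -/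
open Polynomial

attribute [local instance] Classical.propDecidable

/-!
The points `α ^ k ^ j` form a finite set, and the steps `x ↦ x ^ k ^ (s + 1)` turn it into a
finite digraph whose edge labelled `s` out of `x` has weight `v_x(c_s)`. The calmness hypothesis
says exactly that every closed walk has nonnegative weight. As in the Bellman–Ford algorithm,
closed subwalks can be cut out, so the least weight of a walk ending at `x` is finite; its negative
`e x` satisfies `e x ≤ e (x ^ k ^ (s + 1)) + v_x(c_s)`. Then `h = ∏ (z - x) ^ e x` works, since
`v_x(h(z ^ k ^ (s + 1))) ≥ v_{x ^ k ^ (s + 1)}(h) = e (x ^ k ^ (s + 1))` while `v_x(h) = e x`.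
-/

section WalkPotential

variable {V σ : Type*} (next : V → σ → V) (w : V → σ → ℤ)

def walkWeight : V → List σ → ℤ
  | _, [] => 0
  | v, s :: l => w v s + walkWeight (next v s) l

lemma walkWeight_append (v : V) (l₁ l₂ : List σ) :
    walkWeight next w v (l₁ ++ l₂) =
      walkWeight next w v l₁ + walkWeight next w (l₁.foldl next v) l₂ := by
  induction l₁ generalizing v with
  | nil => simp [walkWeight]
  | cons s l ih => simp only [List.cons_append, walkWeight, ih, List.foldl_cons, add_assoc]

lemma exists_cycle_of_card_lt_length [Finite V] (v : V) {l : List σ}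
    (hl : Nat.card V < l.length) :
    ∃ A B C : List σ,
      l = A ++ B ++ C ∧ B ≠ [] ∧ B.foldl next (A.foldl next v) = A.foldl next v := by
  have hni : ¬ Function.Injective fun t : Fin (l.length + 1) => (l.take t).foldl next v := by
    intro hinj
    have := Nat.card_le_card_of_injective _ hinj
    simp only [Nat.card_eq_fintype_card, Fintype.card_fin] at this
    omega
  obtain ⟨t₁, t₂, hne, heq⟩ : ∃ t₁ t₂ : Fin (l.length + 1), t₁ < t₂ ∧
      (l.take t₁).foldl next v = (l.take t₂).foldl next v := by
    simp only [Function.Injective, not_forall] at hni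
    obtain ⟨a, b, hab, hne⟩ := hni
    rcases lt_or_gt_of_ne hne with h | h
    · exact ⟨a, b, h, hab⟩
    · exact ⟨b, a, h, hab.symm⟩
  have hAB : l.take t₁ ++ (l.take t₂).drop t₁ = l.take t₂ := by
    conv_rhs => rw [← List.take_append_drop (t₁ : ℕ) (l.take t₂)]
    rw [List.take_take, min_eq_left (Fin.val_fin_le.2 hne.le)]
  refine ⟨l.take t₁, (l.take t₂).drop t₁, l.drop t₂, ?_, ?_, ?_⟩
  · rw [hAB, List.take_append_drop]
  · rw [← List.length_pos_iff, List.length_drop, List.length_take]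
    have := t₂.isLt
    omega
  · rw [← List.foldl_append, hAB, heq]

variable {next w}

lemma exists_short_walk_le [Finite V]
    (hcycle : ∀ v l, l.foldl next v = v → 0 ≤ walkWeight next w v l) (v : V) (l : List σ) :
    ∃ l' : List σ, l'.length ≤ Nat.card V ∧ l'.foldl next v = l.foldl next v ∧
      walkWeight next w v l' ≤ walkWeight next w v l := by
  induction hlen : l.length using Nat.strong_induction_on generalizing l with
  | _ n ih =>
    by_cases hl : l.length ≤ Nat.card V
    · exact ⟨l, hl, rfl, le_rfl⟩
    obtain ⟨A, B, C, rfl, hB, hclosed⟩ := exists_cycle_of_card_lt_length next v (not_le.1 hl)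
    have hshort : (A ++ C).length < n := by
      subst hlen
      simp only [List.length_append]
      have := List.length_pos_iff.2 hB
      omega
    obtain ⟨l', hl', hend, hweight⟩ := ih _ hshort (A ++ C) rfl
    refine ⟨l', hl', by simp only [hend, List.foldl_append, hclosed], hweight.trans ?_⟩
    have := hcycle _ B hclosed
    simp only [walkWeight_append, List.foldl_append, hclosed]
    omega

variable (next w)

-- `sInf` of a set of integers that is not bounded below is junk; see `bddBelow_walkWeight`.
noncomputable def minWeightTo (u : V) : ℤ :=
  sInf {x | ∃ v l, l.foldl next v = u ∧ walkWeight next w v l = x}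

variable {next w}
variable [Finite V] [Finite σ]
  (hcycle : ∀ v l, l.foldl next v = v → 0 ≤ walkWeight next w v l)
include hcycle

lemma bddBelow_walkWeight (u : V) :
    BddBelow {x | ∃ v l, l.foldl next v = u ∧ walkWeight next w v l = x} := by
  obtain ⟨b, hb⟩ := ((Set.finite_univ (α := V)).prod
    (List.finite_length_le σ (Nat.card V))).image (fun p => walkWeight next w p.1 p.2) |>.bddBelow
  refine ⟨b, ?_⟩
  rintro _ ⟨v, l, -, rfl⟩
  obtain ⟨l', hl', -, hle⟩ := exists_short_walk_le hcycle v l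
  exact (hb ⟨(v, l'), ⟨Set.mem_univ _, hl'⟩, rfl⟩).trans hle

lemma minWeightTo_le (v : V) (l : List σ) :
    minWeightTo next w (l.foldl next v) ≤ walkWeight next w v l :=
  csInf_le (bddBelow_walkWeight hcycle _) ⟨v, l, rfl, rfl⟩

lemma minWeightTo_nonpos (u : V) : minWeightTo next w u ≤ 0 :=
  minWeightTo_le hcycle u []

lemma minWeightTo_step_le (u : V) (s : σ) :
    minWeightTo next w (next u s) ≤ minWeightTo next w u + w u s := by
  rw [← sub_le_iff_le_add]
  refine le_csInf ⟨0, u, [], rfl, rfl⟩ ?_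
  rintro _ ⟨v, l, rfl, rfl⟩
  have := minWeightTo_le hcycle v (l ++ [s])
  simp only [List.foldl_append, List.foldl_cons, List.foldl_nil, walkWeight_append,
    walkWeight] at this
  omega

theorem exists_potential_of_cycle_nonneg :
    ∃ e : V → ℕ, ∀ u s, (e u : ℤ) ≤ e (next u s) + w u s := by
  refine ⟨fun u => (-minWeightTo next w u).toNat, fun u s => ?_⟩
  have h₁ := minWeightTo_nonpos hcycle u
  have h₂ := minWeightTo_nonpos hcycle (next u s)
  have := minWeightTo_step_le hcycle u s
  simp only [Int.toNat_of_nonneg (neg_nonneg.2 h₁), Int.toNat_of_nonneg (neg_nonneg.2 h₂)]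
  omega

end WalkPotential

section RationalFunctions

variable {K : Type*} [Field K]

lemma substPow_toRat_s12 (N : ℕ) (p : K[X]) : substPow N (toRat p) = toRat (expand K N p) := by
  have h : ∀ q : K[X], toRat q = aeval (RatFunc.X : RatFunc K) q := fun q => by
    rw [← RatFunc.algebraMap_X, aeval_algebraMap_apply, aeval_X_left_apply]; rfl
  rw [h (expand K N p), expand_aeval, substPow, toRat, RatFunc.eval_algebraMap]
  rfl

lemma vInt_toRat_div (γ : K) {p q : K[X]} (hp : p ≠ 0) (hq : q ≠ 0) :
    vInt γ (toRat p / toRat q) = (p.rootMultiplicity γ : ℤ) - q.rootMultiplicity γ := by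
  obtain ⟨r, hpq⟩ : ∃ r, toRat p / toRat q = r := ⟨_, rfl⟩
  have hr : r ≠ 0 :=
    hpq ▸ div_ne_zero (RatFunc.algebraMap_ne_zero hp) (RatFunc.algebraMap_ne_zero hq)
  have hcross : r.num * q = p * r.denom := by
    apply RatFunc.algebraMap_injective K
    have := (RatFunc.num_div_denom r).trans hpq.symm
    unfold toRat at this
    rw [div_eq_div_iff (RatFunc.algebraMap_ne_zero r.denom_ne_zero)
      (RatFunc.algebraMap_ne_zero hq)] at this
    simpa only [map_mul] using this
  have := congrArg (rootMultiplicity γ) hcross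
  rw [rootMultiplicity_mul (mul_ne_zero (RatFunc.num_ne_zero hr) hq),
    rootMultiplicity_mul (mul_ne_zero hp r.denom_ne_zero)] at this
  rw [hpq, vInt]
  omega

lemma rootMultiplicity_le_rootMultiplicity_expand (γ : K) (N : ℕ) {p : K[X]}
    (hp : expand K N p ≠ 0) :
    p.rootMultiplicity (γ ^ N) ≤ (expand K N p).rootMultiplicity γ := by
  rw [le_rootMultiplicity_iff hp]
  have h := map_dvd (expand K N) (pow_rootMultiplicity_dvd p (γ ^ N))
  rw [map_pow, map_sub, expand_X, expand_C, C_pow] at h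
  exact (pow_dvd_pow_of_dvd (sub_dvd_pow_sub_pow X (C γ) N) _).trans h

lemma vAt_substPow_div_mul_nonneg {γ : K} {N : ℕ} {h : K[X]} {c : RatFunc K}
    (hh : h ≠ 0) (hc : c ≠ 0)
    (hle : (h.rootMultiplicity γ : ℤ) ≤ h.rootMultiplicity (γ ^ N) + vInt γ c) :
    0 ≤ vAt γ (substPow N (toRat h) / toRat h * c) := by
  unfold vAt
  split_ifs with h0
  · exact le_top
  rw [substPow_toRat_s12] at h0 ⊢
  have hexp : expand K N h ≠ 0 := fun hz => h0 (by rw [hz, toRat, map_zero, zero_div, zero_mul])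
  have hnum := RatFunc.num_ne_zero hc
  have hsplit : toRat (expand K N h) / toRat h * c =
      toRat (expand K N h * c.num) / toRat (h * c.denom) := by
    conv_lhs => rw [← RatFunc.num_div_denom c]
    rw [div_mul_div_comm]
    simp only [toRat, map_mul]
  rw [WithTop.coe_nonneg, hsplit,
    vInt_toRat_div γ (mul_ne_zero hexp hnum) (mul_ne_zero hh c.denom_ne_zero),
    rootMultiplicity_mul (mul_ne_zero hexp hnum),
    rootMultiplicity_mul (mul_ne_zero hh c.denom_ne_zero)]
  have := rootMultiplicity_le_rootMultiplicity_expand γ N hexp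
  unfold vInt at hle
  omega

lemma clmList_cons (k : ℕ) (γ : K) {n : ℕ} (c : Fin n → RatFunc K)
    (s : Fin n) (l : List (Fin n)) :
    clmList k γ c (s :: l) = vAt γ (c s) + clmList k (γ ^ k ^ (s.1 + 1)) c l := by
  unfold clmList
  have h0 : abarList (s :: l) 0 = 0 := by simp [abarList]
  have hsucc (t : ℕ) : abarList (s :: l) (t + 1) = (s.1 + 1) + abarList l t := by
    simp [abarList, List.take_succ_cons]
  refine (Fin.sum_univ_succ (n := l.length) _).trans ?_
  simp only [Fin.val_zero, Fin.val_succ, h0, hsucc, pow_zero, pow_one, pow_add, pow_mul]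
  rfl

end RationalFunctions

section Orbit

variable {K : Type*} [Field K]

lemma periodic_pow_pow {k m : ℕ} {α : K} (hα : α ^ k ^ m = α) :
    Function.Periodic (fun j : ℕ => α ^ k ^ j) m := fun j => by
  simp only [add_comm j, pow_add, pow_mul, hα]

variable (k : ℕ) (α : K)

def powOrbit : Set K := Set.range fun j : ℕ => α ^ k ^ j

lemma finite_powOrbit {m : ℕ} (hm : 0 < m) (hα : α ^ k ^ m = α) : (powOrbit k α).Finite := by
  refine ((Set.finite_Iio m).image fun j => α ^ k ^ j).subset ?_
  rintro _ ⟨j, rfl⟩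
  exact ⟨j % m, Nat.mod_lt j hm, (periodic_pow_pow hα).map_mod_nat j⟩

def orbitStep {n : ℕ} (x : powOrbit k α) (s : Fin n) : powOrbit k α :=
  ⟨x ^ k ^ (s.1 + 1), by
    obtain ⟨j, hj⟩ := x.2
    exact ⟨j + (s.1 + 1), by simp only [← hj, pow_add, pow_mul]⟩⟩

lemma coe_foldl_orbitStep {n : ℕ} (x : powOrbit k α) (l : List (Fin n)) :
    ((l.foldl (orbitStep k α) x : powOrbit k α) : K) = x ^ k ^ barSum l := by
  induction l generalizing x with
  | nil => simp [barSum]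
  | cons s l ih =>
    rw [List.foldl_cons, ih]
    simp only [orbitStep, barSum, List.map_cons, List.sum_cons, pow_add, pow_mul]

lemma clmList_eq_walkWeight {n : ℕ} {c : Fin n → RatFunc K} (hc : ∀ i, c i ≠ 0)
    (x : powOrbit k α) (l : List (Fin n)) :
    clmList k (x : K) c l = walkWeight (orbitStep k α) (fun x s => vInt x.1 (c s)) x l := by
  induction l generalizing x with
  | nil => simp [clmList, walkWeight]
  | cons s l ih =>
    rw [clmList_cons, walkWeight, WithTop.coe_add, vAt, if_neg (hc s), ← ih]
    rfl

end Orbit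

section RootMultiplicities

variable {K : Type*} [Field K] {S : Set K} [Finite S]

-- `∏ x ∈ S, (X - C x) ^ e x`, as the product over a multiset of roots.
noncomputable def polyWithRootMultiplicity (e : S → ℕ) : K[X] :=
  (((Finsupp.equivFunOnFinite.symm e).toMultiset.map Subtype.val).map fun a => X - C a).prod

lemma polyWithRootMultiplicity_ne_zero (e : S → ℕ) : polyWithRootMultiplicity e ≠ 0 :=
  (monic_multiset_prod_of_monic _ _ fun a _ => monic_X_sub_C a).ne_zero

lemma rootMultiplicity_polyWithRootMultiplicity (e : S → ℕ) (x : S) :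
    (polyWithRootMultiplicity e).rootMultiplicity (x : K) = e x := by
  rw [polyWithRootMultiplicity, ← count_roots, roots_multiset_prod_X_sub_C,
    Multiset.count_map_eq_count' _ _ Subtype.val_injective, Finsupp.count_toMultiset,
    Finsupp.coe_equivFunOnFinite_symm]

end RootMultiplicities

theorem stmt12_general {K : Type*} [Field K] (k : ℕ) (α : K)
    (m : ℕ) (hm : 0 < m) (hmfix : α ^ k ^ m = α)
    (c : Fin m → RatFunc K) (hcz : ∀ i, c i ≠ 0)
    (hclm : ∀ i : ℕ, i < m → ∀ l : List (Fin m),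
      α ^ k ^ (i + barSum l) = α ^ k ^ i → 0 ≤ clmList k (α ^ k ^ i) c l) :
    ∃ h : Polynomial K, h ≠ 0 ∧
      ∀ (j : ℕ) (i : Fin m), 0 ≤ vAt (α ^ k ^ j) (act k (toRat h) c i) := by
  have : Finite (powOrbit k α) := (finite_powOrbit k α hm hmfix).to_subtype
  have hcycle (x : powOrbit k α) (l : List (Fin m)) (hl : l.foldl (orbitStep k α) x = x) :
      0 ≤ walkWeight (orbitStep k α) (fun x s => vInt x.1 (c s)) x l := by
    obtain ⟨_, j, rfl⟩ := x
    have hj : α ^ k ^ (j % m) = α ^ k ^ j := (periodic_pow_pow hmfix).map_mod_nat j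
    have hclosed : α ^ k ^ (j % m + barSum l) = α ^ k ^ (j % m) := by
      rw [pow_add, pow_mul, hj]
      exact (coe_foldl_orbitStep k α _ l).symm.trans (congrArg Subtype.val hl)
    have hclm' := hclm _ (Nat.mod_lt j hm) l hclosed
    rwa [hj, clmList_eq_walkWeight k α hcz ⟨_, j, rfl⟩, WithTop.coe_nonneg] at hclm'
  obtain ⟨e, he⟩ := exists_potential_of_cycle_nonneg hcycle
  refine ⟨polyWithRootMultiplicity e, polyWithRootMultiplicity_ne_zero e, fun j i => ?_⟩
  refine vAt_substPow_div_mul_nonneg (polyWithRootMultiplicity_ne_zero e) (hcz i) ?_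
  have hx := he ⟨α ^ k ^ j, j, rfl⟩ i
  rwa [← rootMultiplicity_polyWithRootMultiplicity e,
    ← rootMultiplicity_polyWithRootMultiplicity e] at hx

theorem stmt12 {K : Type*} [Field K] [IsAlgClosed K] (k : ℕ) (hk : 2 ≤ k)
    (hch : ∀ p : ℕ, p.Prime → CharP K p → ¬ p ∣ k)
    (α : K) (hα : IsAnxious k α) (hru : IsRootOfUnity α)
    (m : ℕ) (hm : 0 < m) (hmfix : α ^ k ^ m = α)
    (hmin : ∀ m' : ℕ, 0 < m' → α ^ k ^ m' = α → m ≤ m')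
    (c : Fin m → RatFunc K) (hcz : ∀ i, c i ≠ 0)
    (hclm : ∀ i : ℕ, i < m → ∀ l : List (Fin m),
      α ^ k ^ (i + barSum l) = α ^ k ^ i → 0 ≤ clmList k (α ^ k ^ i) c l) :
    ∃ h : Polynomial K, h ≠ 0 ∧
      ∀ (j : ℕ) (i : Fin m), 0 ≤ vAt (α ^ k ^ j) (act k (toRat h) c i) :=
  stmt12_general k α m hm hmfix c hcz hclm
end
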